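/- Let (X,d) be a metric space, M a nonempty proper closed subset of X, F : X∖M → (0,∞) a 1-Lipschitz function, and i(x,y) = 2·log((F(x) + F(y) + d(x,y)) / (2·√(F(x)·F(y)))) the generalized Nikolov–Andreev metric on X∖M. Then the identity map 1 : (X∖M, d) → (X∖M, i) is a homeomorphism, and it is 3-quasiconformal: for every x ∈ X∖M, limsup_{r→0⁺} [ sup{ i(x,y) : y ∈ X∖M, d(x,y) ≤ r } / inf{ i(x,y) : y ∈ X∖M, d(x,y) ≥ r } ] ≤ 3. -/

import Mathlib

open Real Filter Topology

/-- Generalized Nikolov–Andreev function. -/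
noncomputable def iNA {X : Type*} [MetricSpace X] (F : X → ℝ) (x y : X) : ℝ :=
  2 * Real.log ((F x + F y + dist x y) / (2 * Real.sqrt (F x * F y)))

/-!
Writing `a = F x`, `b = F y`, `d = d(x,y)`, the 1-Lipschitz condition `|a - b| ≤ d` squeezes
`i(x,y)` between two explicit functions of `d` alone: `d / (a + d) ≤ i(x,y)` (AM–GM and
`1 - 1/s ≤ log s`), and `i(x,y) ≤ r (3a + r) / (a (a - r))` whenever `d ≤ r < a`
(`log s ≤ s - 1`). Both bounds are comparable to `d / a` near `0`, which gives the homeomorphism,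
and their quotient at radius `r` is `(3a + r)(a + r) / (a (a - r)) → 3`, which gives the
quasiconformality.
-/

lemma Real.sqrt_mul_le_half_add {a b : ℝ} (ha : 0 ≤ a) (hb : 0 ≤ b) :
    √(a * b) ≤ (a + b) / 2 :=
  Real.sqrt_le_iff.2 ⟨by positivity, by nlinarith [sq_nonneg (a - b)]⟩

section

variable {X : Type*} [MetricSpace X] (F : X → ℝ) {x y : X} {M : Set X}

lemma iNA_comm (x y : X) : iNA F x y = iNA F y x := by
  rw [iNA, iNA, dist_comm, mul_comm (F x), add_comm (F x)]

lemma dist_div_add_le_iNA (hx : 0 < F x) (hy : 0 < F y) (hlip : |F x - F y| ≤ dist x y) :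
    dist x y / (F x + dist x y) ≤ iNA F x y := by
  set a := F x
  set b := F y
  set d := dist x y
  have hd : 0 ≤ d := dist_nonneg
  have hb : b ≤ a + d := by linarith [(abs_le.1 hlip).1]
  set s := (2 * a + 2 * d) / (2 * a + d)
  have hs : s ≤ (a + b + d) / (2 * √(a * b)) := calc
    s ≤ (a + b + d) / (a + b) := by
      rw [div_le_div_iff₀ (by positivity) (by positivity)]; nlinarith
    _ ≤ (a + b + d) / (2 * √(a * b)) :=
      div_le_div_of_nonneg_left (by positivity) (by positivity)
        (by linarith [Real.sqrt_mul_le_half_add hx.le hy.le])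
  calc d / (a + d) = 2 * (1 - s⁻¹) := by simp only [s]; field_simp; ring
    _ ≤ 2 * log s := by gcongr; exact one_sub_inv_le_log_of_pos (by positivity)
    _ ≤ 2 * log ((a + b + d) / (2 * √(a * b))) := by gcongr

lemma iNA_nonneg (hx : 0 < F x) (hy : 0 < F y) (hlip : |F x - F y| ≤ dist x y) :
    0 ≤ iNA F x y :=
  (div_nonneg dist_nonneg (by positivity)).trans (dist_div_add_le_iNA F hx hy hlip)

lemma iNA_le_of_dist_le {r : ℝ} (hlip : |F x - F y| ≤ dist x y) (hdr : dist x y ≤ r)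
    (hr : r < F x) : iNA F x y ≤ r * (3 * F x + r) / (F x * (F x - r)) := by
  set a := F x
  set b := F y
  set d := dist x y
  have hd : 0 ≤ d := dist_nonneg
  have hab := abs_le.1 hlip
  have har : 0 < a - r := by linarith
  have hr0 : 0 ≤ r := hd.trans hdr
  have ha : 0 < a := by linarith
  have hrb : a - r ≤ b := by linarith
  have hb : 0 < b := by linarith
  set Q := (a + r) / √(a * (a - r))
  have hQ : (a + b + d) / (2 * √(a * b)) ≤ Q := calc
    (a + b + d) / (2 * √(a * b)) ≤ 2 * (a + r) / (2 * √(a * (a - r))) :=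
      div_le_div₀ (by positivity) (by linarith) (by positivity) (by gcongr)
    _ = Q := by ring
  calc 2 * log ((a + b + d) / (2 * √(a * b))) ≤ 2 * log Q := by gcongr
    _ = log (Q ^ 2) := by rw [log_pow]; norm_num
    _ ≤ Q ^ 2 - 1 := log_le_sub_one_of_pos (by positivity)
    _ = r * (3 * a + r) / (a * (a - r)) := by
      rw [div_pow, sq_sqrt (by positivity)]; field_simp; ring

lemma dist_le_of_iNA_le_half (hx : 0 < F x) (hy : 0 < F y) (hlip : |F x - F y| ≤ dist x y)
    (h : iNA F x y ≤ 1 / 2) : dist x y ≤ 2 * F x * iNA F x y := by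
  have hlow := dist_div_add_le_iNA F hx hy hlip
  rw [div_le_iff₀ (by positivity)] at hlow
  nlinarith [mul_nonneg (sub_nonneg.2 h) (dist_nonneg (x := x) (y := y))]

lemma iNA_le_of_dist_le_half (hx : 0 < F x) (hlip : |F x - F y| ≤ dist x y)
    (hd : dist x y ≤ F x / 2) : iNA F x y ≤ 7 / F x * dist x y := by
  have hdx : 0 ≤ dist x y := dist_nonneg
  refine (iNA_le_of_dist_le F hlip le_rfl (by linarith)).trans ?_
  rw [div_mul_eq_mul_div, div_le_div_iff₀ (mul_pos hx (by linarith)) hx]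
  nlinarith [mul_nonneg (mul_nonneg hdx hx.le) (by linarith : 0 ≤ F x / 2 - dist x y)]

lemma tendsto_dist_iff_tendsto_iNA {ι : Type*} {l : Filter ι} {u : ι → X} (hx : 0 < F x)
    (hu : ∀ n, 0 < F (u n)) (hlip : ∀ n, |F x - F (u n)| ≤ dist x (u n)) :
    Tendsto (fun n => dist x (u n)) l (𝓝 0) ↔ Tendsto (fun n => iNA F x (u n)) l (𝓝 0) := by
  have hnonneg n : 0 ≤ iNA F x (u n) := iNA_nonneg F hx (hu n) (hlip n)
  constructor
  · intro hd
    refine squeeze_zero' (Eventually.of_forall hnonneg) ?_ (by simpa using hd.const_mul (7 / F x))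
    filter_upwards [hd.eventually (ge_mem_nhds (half_pos hx))] with n hn
    exact iNA_le_of_dist_le_half F hx (hlip n) hn
  · intro hi
    refine squeeze_zero' (Eventually.of_forall fun _ => dist_nonneg) ?_
      (by simpa using hi.const_mul (2 * F x))
    filter_upwards [hi.eventually (ge_mem_nhds one_half_pos)] with n hn
    exact dist_le_of_iNA_le_half F hx (hu n) (hlip n) hn

lemma sSup_iNA_le (hlip : ∀ y ∉ M, |F x - F y| ≤ dist x y) {r : ℝ} (hr0 : 0 ≤ r)
    (hr : r < F x) :
    sSup ((fun y => iNA F x y) '' {y | y ∉ M ∧ dist x y ≤ r}) ≤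
      r * (3 * F x + r) / (F x * (F x - r)) := by
  refine Real.sSup_le ?_ (div_nonneg (by nlinarith) (mul_nonneg (by linarith) (by linarith)))
  rintro _ ⟨y, ⟨hyM, hyr⟩, rfl⟩
  exact iNA_le_of_dist_le F (hlip y hyM) hyr hr

lemma div_add_le_sInf_iNA (hx : 0 < F x) (hpos : ∀ y ∉ M, 0 < F y)
    (hlip : ∀ y ∉ M, |F x - F y| ≤ dist x y) {r : ℝ} (hr0 : 0 ≤ r)
    (hne : {y | y ∉ M ∧ r ≤ dist x y}.Nonempty) :
    r / (F x + r) ≤ sInf ((fun y => iNA F x y) '' {y | y ∉ M ∧ r ≤ dist x y}) := by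
  refine le_csInf (hne.image _) ?_
  rintro _ ⟨y, ⟨hyM, hyr⟩, rfl⟩
  refine le_trans ?_ (dist_div_add_le_iNA F hx (hpos y hyM) (hlip y hyM))
  rw [div_le_div_iff₀ (by positivity) (by positivity)]
  nlinarith

/-- The quotient `H(x, r)` in the definition of quasiconformality, for the identity map
`(X ∖ M, d) → (X ∖ M, i)`. -/
noncomputable def iNADistortion (M : Set X) (x : X) (r : ℝ) : ℝ :=
  sSup ((fun y => iNA F x y) '' {y | y ∉ M ∧ dist x y ≤ r}) /
    sInf ((fun y => iNA F x y) '' {y | y ∉ M ∧ r ≤ dist x y})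

lemma iNADistortion_nonneg (hx : 0 < F x) (hpos : ∀ y ∉ M, 0 < F y)
    (hlip : ∀ y ∉ M, |F x - F y| ≤ dist x y) (r : ℝ) : 0 ≤ iNADistortion F M x r := by
  have h : ∀ s : Set X, s ⊆ Mᶜ → ∀ z ∈ (fun y => iNA F x y) '' s, 0 ≤ z := by
    rintro s hs _ ⟨y, hy, rfl⟩
    exact iNA_nonneg F hx (hpos y (hs hy)) (hlip y (hs hy))
  exact div_nonneg (Real.sSup_nonneg (h _ fun y hy => hy.1))
    (Real.sInf_nonneg (h _ fun y hy => hy.1))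

lemma iNADistortion_le (hx : 0 < F x) (hpos : ∀ y ∉ M, 0 < F y)
    (hlip : ∀ y ∉ M, |F x - F y| ≤ dist x y) {r : ℝ} (hr0 : 0 < r) (hr : r < F x) :
    iNADistortion F M x r ≤ (3 * F x + r) * (F x + r) / (F x * (F x - r)) := by
  have har : 0 < F x - r := by linarith
  rcases Set.eq_empty_or_nonempty {y | y ∉ M ∧ r ≤ dist x y} with hempty | hne
  · rw [iNADistortion, hempty, Set.image_empty, Real.sInf_empty, div_zero]
    positivity
  calc iNADistortion F M x r ≤ r * (3 * F x + r) / (F x * (F x - r)) / (r / (F x + r)) :=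
        div_le_div₀ (by positivity) (sSup_iNA_le F hlip hr0.le hr) (by positivity)
          (div_add_le_sInf_iNA F hx hpos hlip hr0.le hne)
    _ = (3 * F x + r) * (F x + r) / (F x * (F x - r)) := by field_simp

lemma limsup_iNADistortion_le (hx : 0 < F x) (hpos : ∀ y ∉ M, 0 < F y)
    (hlip : ∀ y ∉ M, |F x - F y| ≤ dist x y) :
    limsup (iNADistortion F M x) (𝓝[>] 0) ≤ 3 := by
  set g := fun r : ℝ => (3 * F x + r) * (F x + r) / (F x * (F x - r))
  have hg : Tendsto g (𝓝[>] 0) (𝓝 3) := by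
    have hcont : ContinuousAt g 0 :=
      ContinuousAt.div (by fun_prop) (by fun_prop) (by simp [hx.ne'])
    have h3 : g 0 = 3 := by simp only [g, add_zero, sub_zero]; field_simp
    exact tendsto_nhdsWithin_of_tendsto_nhds (h3 ▸ hcont.tendsto)
  have hle : iNADistortion F M x ≤ᶠ[𝓝[>] 0] g := by
    filter_upwards [Ioo_mem_nhdsGT hx] with r hr
    exact iNADistortion_le F hx hpos hlip hr.1 hr.2
  calc limsup (iNADistortion F M x) (𝓝[>] 0) ≤ limsup g (𝓝[>] 0) :=
        limsup_le_limsup hle (isCoboundedUnder_le_of_le _ (iNADistortion_nonneg F hx hpos hlip))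
          hg.isBoundedUnder_le
    _ = 3 := hg.limsup_eq

end

theorem stmt_13_general {X : Type*} [MetricSpace X] (M : Set X)
    (F : X → ℝ) (hFpos : ∀ x ∉ M, 0 < F x)
    (hFlip : ∀ x ∉ M, ∀ y ∉ M, |F x - F y| ≤ dist x y) :
    -- the identity map `(X∖M, d) → (X∖M, i)` is a homeomorphism
    (∀ x ∉ M, ∀ u : ℕ → X, (∀ n, u n ∉ M) →
      (Tendsto (fun n => dist (u n) x) atTop (nhds 0) ↔
        Tendsto (fun n => iNA F (u n) x) atTop (nhds 0))) ∧
    -- and it is 3-quasiconformal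
    (∀ x ∉ M,
      Filter.limsup
        (fun r : ℝ =>
          sSup ((fun y => iNA F x y) '' {y | y ∉ M ∧ dist x y ≤ r}) /
          sInf ((fun y => iNA F x y) '' {y | y ∉ M ∧ r ≤ dist x y}))
        (nhdsWithin (0 : ℝ) (Set.Ioi 0)) ≤ 3) := by
  refine ⟨fun x hx u hu => ?_, fun x hx =>
    limsup_iNADistortion_le F (hFpos x hx) hFpos (hFlip x hx)⟩
  simp_rw [dist_comm _ x, iNA_comm F _ x]
  exact tendsto_dist_iff_tendsto_iNA F (hFpos x hx) (fun n => hFpos _ (hu n))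
    (fun n => hFlip x hx _ (hu n))

theorem stmt_13 {X : Type*} [MetricSpace X] (M : Set X)
    (hMclosed : IsClosed M) (hMne : M.Nonempty) (hMproper : M ≠ Set.univ)
    (F : X → ℝ) (hFpos : ∀ x ∉ M, 0 < F x)
    (hFlip : ∀ x ∉ M, ∀ y ∉ M, |F x - F y| ≤ dist x y) :
    -- the identity map `(X∖M, d) → (X∖M, i)` is a homeomorphism
    (∀ x ∉ M, ∀ u : ℕ → X, (∀ n, u n ∉ M) →
      (Tendsto (fun n => dist (u n) x) atTop (nhds 0) ↔
        Tendsto (fun n => iNA F (u n) x) atTop (nhds 0))) ∧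
    -- and it is 3-quasiconformal
    (∀ x ∉ M,
      Filter.limsup
        (fun r : ℝ =>
          sSup ((fun y => iNA F x y) '' {y | y ∉ M ∧ dist x y ≤ r}) /
          sInf ((fun y => iNA F x y) '' {y | y ∉ M ∧ r ≤ dist x y}))
        (nhdsWithin (0 : ℝ) (Set.Ioi 0)) ≤ 3) :=
  stmt_13_general M F hFpos hFlip
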